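/- arXiv:2305.07860 — 3 statements merged into one kernel-verified Lean document; each statement's English description precedes it below -/
import Mathlib

section
/- Fix a positive integer k and let p_1,…,p_k be the first k primes, q = p_1⋯p_k, and E_k = {m ∈ ℕ : gcd(m, q) = 1}. Let (a_N)_{N≥0} be a real sequence with a_0 = 0 such that a_N/(log N)^k converges as N → ∞. Then lim_{N→∞} (1/N) Σ_{m ∈ E_k} a_{⌊N/m⌋} exists and equals ((p_1−1)⋯(p_k−1)/(p_1⋯p_k)) · ∫_0^1 a_{⌊1/x⌋} dx. -/
/-!
Group the terms by the value `n = ⌊N/m⌋`. The set of `m` coprime to `q` is `q`-periodic, so it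
has density `φ(q)/q`, and the proportion of `m ≤ N` in `E_k` with `⌊N/m⌋ = n` tends to
`(φ(q)/q) (1/n - 1/(n+1))`, which is also the measure of `{x ∈ (0,1] : ⌊1/x⌋ = n}`. This gives
the theorem for sequences with finite support. Since `a_N = O((log N)^k) = o(N^{1/2})`, the
terms with `n > M` contribute uniformly little, because `(1/N) Σ_{m ≤ N} (N/m)^{1/2}` is bounded.
-/

open Filter MeasureTheory Topology Finset Asymptotics

namespace FolnerAverage

section Density

variable {p : ℕ → Prop} [DecidablePred p]

theorem card_filter_Ico_mul_of_periodic {c : ℕ} (hp : Function.Periodic p c) (n t : ℕ) :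
    #{x ∈ Ico n (n + c * t) | p x} = t * Nat.count p c := by
  induction t with
  | zero => simp
  | succ t ih =>
    rw [mul_add_one, ← add_assoc, ← Ico_union_Ico_eq_Ico (b := n + c * t) (by omega) (by omega),
      filter_union, card_union_of_disjoint
        (disjoint_filter_filter (Ico_disjoint_Ico_consecutive _ _ _)),
      ih, Nat.filter_Ico_card_eq_of_periodic _ _ p hp, add_one_mul]

theorem abs_card_filter_Icc_sub_le_of_periodic {c : ℕ} (hc : 0 < c)
    (hp : Function.Periodic p c) (j : ℕ) :
    |(#{m ∈ Icc 1 j | p m} : ℝ) - Nat.count p c / c * j| ≤ Nat.count p c := by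
  set r := Nat.count p c
  have hcount (t : ℕ) : #{m ∈ Ico 1 (1 + c * t) | p m} = t * r :=
    card_filter_Ico_mul_of_periodic hp 1 t
  have hlow : j / c * r ≤ #{m ∈ Icc 1 j | p m} := by
    rw [← hcount]
    refine card_le_card (filter_subset_filter _ fun m hm => ?_)
    simp only [mem_Ico, mem_Icc] at hm ⊢
    have := Nat.mul_div_le j c
    omega
  have hup : #{m ∈ Icc 1 j | p m} ≤ (j / c + 1) * r := by
    rw [← hcount]
    refine card_le_card (filter_subset_filter _ fun m hm => ?_)
    simp only [mem_Ico, mem_Icc] at hm ⊢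
    have := Nat.lt_mul_div_succ j hc
    omega
  have hcR : (0 : ℝ) < c := by exact_mod_cast hc
  have hjc : ((j / c : ℕ) : ℝ) ≤ j / c ∧ (j / c : ℝ) ≤ (j / c : ℕ) + 1 := by
    rw [div_le_iff₀ hcR, le_div_iff₀ hcR]
    constructor
    · exact_mod_cast Nat.div_mul_le_self j c
    · exact_mod_cast (Nat.lt_mul_div_succ j hc).le.trans_eq (mul_comm _ _)
  have hlowR : ((j / c : ℕ) : ℝ) * r ≤ #{m ∈ Icc 1 j | p m} := by exact_mod_cast hlow
  have hupR : (#{m ∈ Icc 1 j | p m} : ℝ) ≤ ((j / c : ℕ) + 1) * r := by exact_mod_cast hup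
  rw [abs_le, div_mul_eq_mul_div, mul_div_assoc]
  constructor <;> nlinarith

theorem tendsto_div_of_abs_sub_mul_le {f : ℕ → ℝ} {δ K : ℝ} (h : ∀ j, |f j - δ * j| ≤ K) :
    Tendsto (fun j : ℕ => f j / j) atTop (𝓝 δ) := by
  rw [tendsto_iff_norm_sub_tendsto_zero]
  refine squeeze_zero_norm' ?_ (tendsto_const_div_atTop_nhds_zero_nat K)
  filter_upwards [eventually_gt_atTop 0] with j hj
  have hjR : (0 : ℝ) < j := by exact_mod_cast hj
  rw [norm_norm, Real.norm_eq_abs, div_sub' hjR.ne', abs_div, abs_of_pos hjR, mul_comm]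
  exact div_le_div_of_nonneg_right (h j) hjR.le

theorem tendsto_comp_div_div {f : ℕ → ℝ} {δ : ℝ}
    (hf : Tendsto (fun j : ℕ => f j / j) atTop (𝓝 δ)) {k : ℕ} (hk : 0 < k) :
    Tendsto (fun N : ℕ => f (N / k) / N) atTop (𝓝 (δ / k)) := by
  have hkR : (0 : ℝ) < k := by exact_mod_cast hk
  have hfloor : Tendsto (fun N : ℕ => ((N / k : ℕ) : ℝ) / N) atTop (𝓝 (1 / k)) := by
    refine ((tendsto_nat_floor_div_atTop.comp
      (tendsto_natCast_atTop_atTop.atTop_div_const hkR)).div_const (k : ℝ)).congr' ?_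
    filter_upwards [eventually_gt_atTop 0] with N hN
    have hNR : (0 : ℝ) < N := by exact_mod_cast hN
    simp only [Function.comp_apply, Nat.floor_div_eq_div]
    field_simp
  have h := (hf.comp (Nat.tendsto_div_const_atTop hk.ne')).mul hfloor
  rw [mul_one_div] at h
  refine h.congr' ?_
  filter_upwards [eventually_ge_atTop k] with N hN
  have hNk : ((N / k : ℕ) : ℝ) ≠ 0 := by exact_mod_cast (Nat.div_pos hN hk).ne'
  simp only [Function.comp_apply]
  field_simp

theorem tendsto_card_filter_Icc_coprime_div {q : ℕ} (hq : 0 < q) :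
    Tendsto (fun j : ℕ => (#{m ∈ Icc 1 j | m.Coprime q} : ℝ) / j) atTop
      (𝓝 (q.totient / q)) := by
  have hp : Function.Periodic (fun m => m.Coprime q) q := fun m => by
    simpa only [Nat.coprime_comm] using Nat.periodic_coprime q m
  have hcount : Nat.count (fun m => m.Coprime q) q = q.totient := by
    simp only [Nat.count_eq_card_filter_range, Nat.totient, Nat.coprime_comm]
  simpa only [hcount] using
    tendsto_div_of_abs_sub_mul_le (abs_card_filter_Icc_sub_le_of_periodic hq hp)

theorem totient_prod_of_injOn {ι : Type*} {s : Finset ι} {f : ι → ℕ} (hf : Set.InjOn f s)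
    (hs : ∀ i ∈ s, (f i).Prime) : Nat.totient (∏ i ∈ s, f i) = ∏ i ∈ s, (f i - 1) := by
  rw [← prod_image (f := fun p => p) hf, ← prod_image (f := fun p => p - 1) hf]
  have hprime : ∀ p ∈ s.image f, p.Prime := by simpa using hs
  have h := Nat.totient_mul_prod_primeFactors (∏ p ∈ s.image f, p)
  rw [Nat.primeFactors_prod hprime, mul_comm] at h
  exact Nat.eq_of_mul_eq_mul_left (prod_pos fun p hp => (hprime p hp).pos) h

end Density

section PowerSums

/-- Bernoulli's inequality applied to `(x - 1) ^ (1 - β) = x ^ (1 - β) (1 - 1/x) ^ (1 - β)`. -/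
theorem one_sub_mul_rpow_neg_le_sub {β x : ℝ} (hβ0 : 0 ≤ β) (hβ1 : β ≤ 1) (hx : 1 ≤ x) :
    (1 - β) * x ^ (-β) ≤ x ^ (1 - β) - (x - 1) ^ (1 - β) := by
  have hx0 : 0 < x := by linarith
  have hinv : x⁻¹ ≤ 1 := inv_le_one_of_one_le₀ hx
  have hbern : (1 + -x⁻¹) ^ (1 - β) ≤ 1 + (1 - β) * -x⁻¹ :=
    rpow_one_add_le_one_add_mul_self (by linarith) (by linarith) (by linarith)
  have hsplit : (x - 1) ^ (1 - β) = x ^ (1 - β) * (1 + -x⁻¹) ^ (1 - β) := by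
    rw [← Real.mul_rpow hx0.le (by linarith)]
    congr 1
    field_simp
    ring
  have hpow : x ^ (1 - β) * x⁻¹ = x ^ (-β) := by
    rw [← Real.rpow_neg_one, ← Real.rpow_add hx0]
    ring_nf
  rw [hsplit]
  nlinarith [Real.rpow_pos_of_pos hx0 (1 - β)]

theorem sum_Icc_rpow_neg_le {β : ℝ} (hβ0 : 0 ≤ β) (hβ1 : β < 1) (N : ℕ) :
    ∑ m ∈ Icc 1 N, (m : ℝ) ^ (-β) ≤ (N : ℝ) ^ (1 - β) / (1 - β) := by
  have hγ : 0 < 1 - β := by linarith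
  induction N with
  | zero => simp [Real.zero_rpow hγ.ne']
  | succ N ih =>
    have key := one_sub_mul_rpow_neg_le_sub hβ0 hβ1.le (x := N + 1)
      (by linarith [N.cast_nonneg (α := ℝ)])
    rw [add_sub_cancel_right] at key
    rw [sum_Icc_succ_top (by omega), Nat.cast_add_one]
    rw [le_div_iff₀ hγ] at ih ⊢
    nlinarith

end PowerSums

section FloorDivAvg

noncomputable def floorDivAvg (p : ℕ → Prop) [DecidablePred p] (N : ℕ) : (ℕ → ℝ) →ₗ[ℝ] ℝ where
  toFun a := 1 / (N : ℝ) * ∑ m ∈ Icc 1 N, if p m then a (N / m) else 0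
  map_add' a b := by
    simp only [Pi.add_apply, ← mul_add, ← sum_add_distrib, ite_add_ite, add_zero]
  map_smul' c a := by
    simp only [Pi.smul_apply, smul_eq_mul, RingHom.id_apply, mul_sum, mul_ite, mul_zero]
    exact sum_congr rfl fun m _ => by split_ifs <;> ring

variable {p : ℕ → Prop} [DecidablePred p] {δ : ℝ}

theorem floorDivAvg_apply (N : ℕ) (a : ℕ → ℝ) :
    floorDivAvg p N a = 1 / (N : ℝ) * ∑ m ∈ Icc 1 N, if p m then a (N / m) else 0 := rfl

theorem abs_floorDivAvg_le {β K : ℝ} (hβ0 : 0 ≤ β) (hβ1 : β < 1) {b : ℕ → ℝ}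
    (hb : ∀ n, |b n| ≤ K * (n : ℝ) ^ β) (N : ℕ) :
    |floorDivAvg p N b| ≤ K / (1 - β) := by
  have hγ : 0 < 1 - β := by linarith
  have hK : 0 ≤ K := by simpa using (abs_nonneg _).trans (hb 1)
  rcases N.eq_zero_or_pos with rfl | hN
  · simp only [floorDivAvg_apply, Nat.cast_zero, div_zero, zero_mul, abs_zero]
    positivity
  have hNR : (0 : ℝ) < N := by exact_mod_cast hN
  have hterm (m : ℕ) (hm : m ∈ Icc 1 N) :
      |if p m then b (N / m) else 0| ≤ K * (N : ℝ) ^ β * (m : ℝ) ^ (-β) := by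
    have hm0 : (0 : ℝ) < m := by exact_mod_cast (mem_Icc.1 hm).1
    calc |if p m then b (N / m) else 0| ≤ |b (N / m)| := by split_ifs <;> simp
      _ ≤ K * ((N / m : ℕ) : ℝ) ^ β := hb _
      _ ≤ K * ((N : ℝ) / m) ^ β := by gcongr; exact Nat.cast_div_le
      _ = K * (N : ℝ) ^ β * (m : ℝ) ^ (-β) := by
        rw [Real.div_rpow hNR.le hm0.le, Real.rpow_neg hm0.le, div_eq_mul_inv, mul_assoc]
  calc |floorDivAvg p N b|
      ≤ 1 / (N : ℝ) * ∑ m ∈ Icc 1 N, K * (N : ℝ) ^ β * (m : ℝ) ^ (-β) := by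
        rw [floorDivAvg_apply, abs_mul, abs_of_pos (by positivity)]
        gcongr
        exact (abs_sum_le_sum_abs _ _).trans (sum_le_sum hterm)
    _ ≤ 1 / (N : ℝ) * (K * (N : ℝ) ^ β * ((N : ℝ) ^ (1 - β) / (1 - β))) := by
        rw [← mul_sum]
        gcongr
        exact sum_Icc_rpow_neg_le hβ0 hβ1 N
    _ = K / (1 - β) := by
        rw [mul_div_assoc', mul_assoc, ← Real.rpow_add hNR, add_sub_cancel, Real.rpow_one]
        field_simp

theorem floorDivAvg_indicator_Ici {k : ℕ} (hk : 0 < k) (N : ℕ) :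
    floorDivAvg p N ((Set.Ici k).indicator 1) = #{m ∈ Icc 1 (N / k) | p m} / (N : ℝ) := by
  rw [floorDivAvg_apply, one_div_mul_eq_div]
  congr 1
  simp only [Set.indicator_apply, Set.mem_Ici, Pi.one_apply, ← ite_and, sum_boole]
  congr 2
  ext m
  simp only [mem_filter, mem_Icc]
  constructor
  · rintro ⟨⟨hm1, -⟩, hpm, hkm⟩
    rw [Nat.le_div_iff_mul_le hm1] at hkm
    exact ⟨⟨hm1, (Nat.le_div_iff_mul_le hk).2 (by linarith)⟩, hpm⟩
  · rintro ⟨⟨hm1, hmN⟩, hpm⟩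
    rw [Nat.le_div_iff_mul_le hk] at hmN
    refine ⟨⟨hm1, ?_⟩, hpm, (Nat.le_div_iff_mul_le hm1).2 (by linarith)⟩
    nlinarith

theorem tendsto_floorDivAvg_single
    (hp : Tendsto (fun j : ℕ => (#{m ∈ Icc 1 j | p m} : ℝ) / j) atTop (𝓝 δ)) (n : ℕ) :
    Tendsto (fun N => floorDivAvg p N (Pi.single n 1)) atTop (𝓝 (δ / (n * (n + 1)))) := by
  rcases n.eq_zero_or_pos with rfl | hn
  · refine tendsto_const_nhds.congr fun N => ?_
    rw [floorDivAvg_apply, Nat.cast_zero, zero_mul, div_zero, eq_comm]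
    refine mul_eq_zero_of_right _ (sum_eq_zero fun m hm => ?_)
    have hm := mem_Icc.1 hm
    simp [(Nat.div_pos hm.2 hm.1).ne']
  have hsingle : (Pi.single n 1 : ℕ → ℝ) =
      (Set.Ici n).indicator 1 - (Set.Ici (n + 1)).indicator 1 := by
    ext m
    simp only [Pi.single_apply, Pi.sub_apply, Set.indicator_apply, Set.mem_Ici, Pi.one_apply]
    split_ifs <;> (try norm_num) <;> omega
  have h := (tendsto_comp_div_div hp hn).sub (tendsto_comp_div_div hp n.succ_pos)
  have hlim : δ / n - δ / (n.succ : ℕ) = δ / (n * (n + 1)) := by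
    rw [Nat.cast_succ]
    field_simp
    ring
  rw [hlim] at h
  simpa only [hsingle, map_sub, floorDivAvg_indicator_Ici hn,
    floorDivAvg_indicator_Ici n.succ_pos] using h

theorem tendsto_floorDivAvg_indicator_Iio
    (hp : Tendsto (fun j : ℕ => (#{m ∈ Icc 1 j | p m} : ℝ) / j) atTop (𝓝 δ))
    (a : ℕ → ℝ) (M : ℕ) :
    Tendsto (fun N => floorDivAvg p N ((Set.Iio M).indicator a)) atTop
      (𝓝 (δ * ∑ n ∈ range M, a n / (n * (n + 1)))) := by
  have hsum : (Set.Iio M).indicator a = ∑ n ∈ range M, a n • Pi.single n 1 := by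
    ext m
    simp [Set.indicator_apply, Pi.single_apply]
  simp only [hsum, map_sum, map_smul, smul_eq_mul, mul_sum]
  refine tendsto_finsetSum _ fun n _ => ?_
  convert (tendsto_floorDivAvg_single hp n).const_mul (a n) using 2
  ring

theorem tendstoUniformly_floorDivAvg_indicator_Iio {β : ℝ} (hβ0 : 0 ≤ β) (hβ1 : β < 1)
    {a : ℕ → ℝ} (ha : a =o[atTop] fun n => (n : ℝ) ^ β) :
    TendstoUniformly (fun M N => floorDivAvg p N ((Set.Iio M).indicator a))
      (fun N => floorDivAvg p N a) atTop := by
  rw [Metric.tendstoUniformly_iff]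
  intro ε hε
  have hγ : 0 < 1 - β := by linarith
  obtain ⟨n₀, hn₀⟩ := eventually_atTop.1 (ha.bound (c := ε * (1 - β) / 2) (by positivity))
  filter_upwards [eventually_ge_atTop n₀] with M hM N
  have htail (n : ℕ) : |(Set.Ici M).indicator a n| ≤ ε * (1 - β) / 2 * (n : ℝ) ^ β := by
    by_cases hn : M ≤ n
    · simpa [Set.indicator_of_mem (Set.mem_Ici.2 hn),
        abs_of_nonneg (Real.rpow_nonneg n.cast_nonneg β)] using hn₀ n (hM.trans hn)
    · simp only [Set.indicator_of_notMem (fun h => hn (Set.mem_Ici.1 h)), abs_zero]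
      positivity
  rw [Real.dist_eq, ← map_sub, ← Set.indicator_compl, Set.compl_Iio]
  calc |floorDivAvg p N ((Set.Ici M).indicator a)| ≤ ε * (1 - β) / 2 / (1 - β) :=
        abs_floorDivAvg_le hβ0 hβ1 htail N
    _ < ε := by field_simp; linarith

theorem summable_div_mul_add_one {a : ℕ → ℝ} {β : ℝ} (hβ1 : β < 1)
    (ha : a =O[atTop] fun n => (n : ℝ) ^ β) : Summable fun n : ℕ => a n / (n * (n + 1)) := by
  obtain ⟨C, hC⟩ := ha.bound
  refine summable_of_isBigO_nat (Real.summable_nat_rpow.2 (by linarith : β - 2 < -1))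
    (IsBigO.of_bound C ?_)
  filter_upwards [hC, eventually_gt_atTop 0] with n han hn
  have hnR : (0 : ℝ) < n := by exact_mod_cast hn
  have hpow : (0 : ℝ) < (n : ℝ) ^ β := Real.rpow_pos_of_pos hnR β
  rw [Real.norm_eq_abs, Real.norm_eq_abs, abs_of_pos hpow] at han
  rw [Real.norm_eq_abs, Real.norm_eq_abs, abs_of_pos (Real.rpow_pos_of_pos hnR _), abs_div,
    abs_of_pos (by positivity : (0 : ℝ) < n * (n + 1)), Real.rpow_sub hnR, Real.rpow_two,
    mul_div_assoc']
  calc |a n| / (n * (n + 1)) ≤ |a n| / n ^ 2 := by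
        gcongr
        nlinarith
    _ ≤ C * (n : ℝ) ^ β / n ^ 2 := by gcongr

/-- The `n = 0` term of the series is `a 0 / 0 = 0`. -/
theorem tendsto_floorDivAvg
    (hp : Tendsto (fun j : ℕ => (#{m ∈ Icc 1 j | p m} : ℝ) / j) atTop (𝓝 δ))
    {β : ℝ} (hβ0 : 0 ≤ β) (hβ1 : β < 1) {a : ℕ → ℝ} (ha : a =o[atTop] fun n => (n : ℝ) ^ β) :
    Tendsto (fun N => floorDivAvg p N a) atTop (𝓝 (δ * ∑' n : ℕ, a n / (n * (n + 1)))) :=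
  (tendstoUniformly_floorDivAvg_indicator_Iio hβ0 hβ1 ha).tendsto_of_eventually_tendsto
    (Eventually.of_forall (tendsto_floorDivAvg_indicator_Iio hp a))
    ((summable_div_mul_add_one hβ1 ha.isBigO).hasSum.tendsto_sum_nat.const_mul δ)

end FloorDivAvg

section Integral

/-- For `n = 0` both sides are empty, the left one because `1 / 0 = 0`. -/
theorem Ioc_one_div_eq (n : ℕ) :
    Set.Ioc (1 / (n + 1 : ℝ)) (1 / n) = Set.Ioc 0 1 ∩ (fun x : ℝ => ⌊1 / x⌋₊) ⁻¹' {n} := by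
  ext x
  simp only [Set.mem_Ioc, Set.mem_inter_iff, Set.mem_preimage, Set.mem_singleton_iff]
  rcases n.eq_zero_or_pos with rfl | hn
  · simp only [CharP.cast_eq_zero, zero_add, div_one, div_zero, Nat.floor_eq_zero]
    constructor
    · rintro ⟨h1, h0⟩
      linarith
    · rintro ⟨⟨hx0, hx1⟩, hlt⟩
      rw [div_lt_one hx0] at hlt
      linarith
  have hnR : (0 : ℝ) < n := by exact_mod_cast hn
  have hn1 : (1 : ℝ) ≤ n := by exact_mod_cast hn
  constructor
  · rintro ⟨h1, h2⟩
    have hx0 : 0 < x := lt_trans (by positivity) h1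
    refine ⟨⟨hx0, h2.trans (div_le_one_of_le₀ hn1 hnR.le)⟩, ?_⟩
    rw [Nat.floor_eq_iff (by positivity)]
    exact ⟨(le_one_div hx0 hnR).1 h2, (one_div_lt hx0 (by positivity)).2 h1⟩
  · rintro ⟨⟨hx0, -⟩, hfloor⟩
    rw [Nat.floor_eq_iff (by positivity)] at hfloor
    exact ⟨(one_div_lt hx0 (by positivity)).1 hfloor.2, (le_one_div hx0 hnR).2 hfloor.1⟩

theorem setIntegral_Ioc_one_div (a : ℕ → ℝ) (n : ℕ) :
    ∫ x in Set.Ioc (1 / (n + 1 : ℝ)) (1 / n), a ⌊1 / x⌋₊ = a n / (n * (n + 1)) := by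
  have hconst : Set.EqOn (fun x : ℝ => a ⌊1 / x⌋₊) (fun _ => a n)
      (Set.Ioc (1 / (n + 1 : ℝ)) (1 / n)) := fun x hx => by
    rw [Ioc_one_div_eq] at hx
    exact congrArg a hx.2
  rw [setIntegral_congr_fun measurableSet_Ioc hconst, setIntegral_const, smul_eq_mul,
    Real.volume_real_Ioc]
  rcases n.eq_zero_or_pos with rfl | hn
  · simp
  have hnR : (0 : ℝ) < n := by exact_mod_cast hn
  rw [max_eq_left (sub_nonneg.2 (one_div_le_one_div_of_le hnR (by linarith)))]
  field_simp
  ring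

theorem hasSum_integral_floor_one_div {a : ℕ → ℝ}
    (ha : Summable fun n : ℕ => a n / (n * (n + 1))) :
    HasSum (fun n : ℕ => a n / (n * (n + 1))) (∫ x in Set.Ioc (0 : ℝ) 1, a ⌊1 / x⌋₊) := by
  set s : ℕ → Set ℝ := fun n => Set.Ioc (1 / (n + 1 : ℝ)) (1 / n)
  have hunion : ⋃ n, s n = Set.Ioc 0 1 := by
    simp only [s, Ioc_one_div_eq, ← Set.inter_iUnion, ← Set.preimage_iUnion,
      Set.iUnion_of_singleton, Set.preimage_univ, Set.inter_univ]
  have hdisj : Pairwise (Function.onFun Disjoint s) := fun i j hij => by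
    simp only [Function.onFun, s, Ioc_one_div_eq]
    exact ((Set.disjoint_singleton.2 hij).preimage _).mono Set.inter_subset_right
      Set.inter_subset_right
  have hpiece (n : ℕ) : IntegrableOn (fun x : ℝ => a ⌊1 / x⌋₊) (s n) :=
    (integrableOn_const measure_Ioc_lt_top.ne).congr_fun (fun x hx => by
      rw [Ioc_one_div_eq] at hx
      exact congrArg a hx.2.symm) measurableSet_Ioc
  have hnorm : Summable fun n => ∫ x in s n, ‖a ⌊1 / x⌋₊‖ := by
    simp only [s, setIntegral_Ioc_one_div (fun n => ‖a n‖)]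
    refine ha.norm.congr fun n => ?_
    rw [norm_div, Real.norm_of_nonneg (by positivity : (0 : ℝ) ≤ n * (n + 1))]
  have h := hasSum_integral_iUnion (fun n => measurableSet_Ioc) hdisj
    (integrableOn_iUnion_of_summable_integral_norm hpiece hnorm)
  simpa only [hunion, s, setIntegral_Ioc_one_div] using h

end Integral

theorem isLittleO_rpow_of_tendsto_div_log_pow {a : ℕ → ℝ} {k : ℕ} {L : ℝ}
    (h : Tendsto (fun N : ℕ => a N / Real.log N ^ k) atTop (𝓝 L)) {s : ℝ} (hs : 0 < s) :
    a =o[atTop] fun n => (n : ℝ) ^ s := by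
  have hO : a =O[atTop] fun n : ℕ => Real.log n ^ k := by
    refine isBigO_of_div_tendsto_nhds ?_ L h
    filter_upwards [eventually_gt_atTop 1] with n hn hlog
    exact absurd (pow_eq_zero_iff'.1 hlog).1 (Real.log_pos (by exact_mod_cast hn)).ne'
  have ho : (fun n : ℕ => Real.log n ^ k) =o[atTop] fun n : ℕ => (n : ℝ) ^ s := by
    simpa only [Function.comp_def, Real.rpow_natCast] using
      (isLittleO_log_rpow_rpow_atTop (k : ℝ) hs).comp_tendsto tendsto_natCast_atTop_atTop
  exact hO.trans_isLittleO ho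

end FolnerAverage

open FolnerAverage in
theorem folner_average_tendsto_general (k : ℕ)
    (a : ℕ → ℝ)
    (hconv : ∃ L : ℝ, Tendsto (fun N : ℕ => a N / (Real.log N) ^ k) atTop (nhds L)) :
    Tendsto
      (fun N : ℕ =>
        (1 / (N : ℝ)) * ∑ m ∈ Finset.Icc 1 N,
          if Nat.Coprime m (∏ j : Fin k, Nat.nth Nat.Prime j.val) then a (N / m) else 0)
      atTop
      (nhds
        ((∏ j : Fin k, ((Nat.nth Nat.Prime j.val : ℝ) - 1))
            / (∏ j : Fin k, (Nat.nth Nat.Prime j.val : ℝ))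
          * ∫ x in Set.Ioc (0 : ℝ) 1, a ⌊1 / x⌋₊)) := by
  obtain ⟨L, hL⟩ := hconv
  set P : Fin k → ℕ := fun j => Nat.nth Nat.Prime j.val
  have hPprime (j : Fin k) : (P j).Prime := Nat.prime_nth_prime j
  have hq : 0 < ∏ j, P j := prod_pos fun j _ => (hPprime j).pos
  have htotient : ((∏ j, P j).totient : ℝ) = ∏ j, ((P j : ℝ) - 1) := by
    rw [totient_prod_of_injOn (fun i _ j _ hij => Fin.val_injective
      (Nat.nth_injective Nat.infinite_setOfPred_prime hij)) fun j _ => hPprime j, Nat.cast_prod]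
    exact prod_congr rfl fun j _ => Nat.cast_pred (hPprime j).pos
  have ha := isLittleO_rpow_of_tendsto_div_log_pow hL one_half_pos
  have hsum := summable_div_mul_add_one one_half_lt_one ha.isBigO
  rw [← (hasSum_integral_floor_one_div hsum).tsum_eq]
  have h := tendsto_floorDivAvg (tendsto_card_filter_Icc_coprime_div hq) one_half_pos.le
    one_half_lt_one ha
  rw [htotient, Nat.cast_prod] at h
  exact h

/-- let `p_1,…,p_k` be the first `k` primes, `q = p_1⋯p_k`, and
`E_k = {m ∈ ℕ : gcd(m,q) = 1}`. If `a : ℕ → ℝ`, `a 0 = 0`, and `a N/(log N)^k` converges,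
then `(1/N) Σ_{m ∈ E_k} a_{⌊N/m⌋} → ((p_1−1)⋯(p_k−1)/q) ∫_0^1 a_{⌊1/x⌋} dx`.
(The sum is effectively over `1 ≤ m ≤ N` since `a_{⌊N/m⌋} = a 0 = 0` for `m > N`.) -/
theorem folner_average_tendsto (k : ℕ) (hk : 0 < k)
    (a : ℕ → ℝ) (ha0 : a 0 = 0)
    (hconv : ∃ L : ℝ, Tendsto (fun N : ℕ => a N / (Real.log N) ^ k) atTop (nhds L)) :
    Tendsto
      (fun N : ℕ =>
        (1 / (N : ℝ)) * ∑ m ∈ Finset.Icc 1 N,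
          if Nat.Coprime m (∏ j : Fin k, Nat.nth Nat.Prime j.val) then a (N / m) else 0)
      atTop
      (nhds
        ((∏ j : Fin k, ((Nat.nth Nat.Prime j.val : ℝ) - 1))
            / (∏ j : Fin k, (Nat.nth Nat.Prime j.val : ℝ))
          * ∫ x in Set.Ioc (0 : ℝ) 1, a ⌊1 / x⌋₊)) :=
  folner_average_tendsto_general k a hconv
end

section
/- Σ_{n=1}^∞ ⌊log₂ n⌋ / (n(n+1)) = 1, where ⌊log₂ n⌋ is the number of powers 2^0, 2^1, … that are ≤ n minus 1 (i.e., the integer part of log₂ n). Equivalently, Σ_{n=1}^∞ (⌊log₂ n⌋ + 1)/(n(n+1)) = 2. -/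
/-!
Since `⌊log_b (n + 1)⌋ = #{j | b ^ (j + 1) ≤ n + 1}`, the series is a double series of
nonnegative terms. Summing first over `n` instead, each `j` contributes the telescoping tail
`∑_{n + 1 ≥ m} 1 / ((n + 1) (n + 2)) = 1 / m` with `m = b ^ (j + 1)`, and the geometric series
`∑_j 1 / b ^ (j + 1)` equals `1 / (b - 1)`.
-/

open Filter Topology

theorem hasSum_sub_succ_of_antitone {u : ℕ → ℝ} {l : ℝ} (hu : Antitone u)
    (hl : Tendsto u atTop (𝓝 l)) : HasSum (fun n ↦ u n - u (n + 1)) (u 0 - l) := by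
  rw [hasSum_iff_tendsto_nat_of_nonneg fun n ↦ sub_nonneg.2 (hu n.le_succ)]
  simpa only [Finset.sum_range_sub'] using tendsto_const_nhds.sub hl

theorem hasSum_ite_le_one_div_mul_succ {m : ℕ} (hm : m ≠ 0) :
    HasSum (fun n : ℕ ↦ if m ≤ n + 1 then (1 : ℝ) / ((n + 1) * (n + 2)) else 0) (1 / m) := by
  -- `1 / (n + 1) - 1 / (n + 2)` telescopes; the `max` makes the terms with `n + 1 < m` vanish
  set u : ℕ → ℝ := fun n ↦ 1 / (max (n + 1) m : ℕ)
  have hu : Antitone u := fun a b hab ↦ by dsimp only [u]; gcongr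
  have hl : Tendsto u atTop (𝓝 0) := by
    refine tendsto_one_div_add_atTop_nhds_zero_nat.congr' (eventually_atTop.2 ⟨m, fun n hn ↦ ?_⟩)
    simp only [u, max_eq_left (show m ≤ n + 1 by omega)]
    push_cast; ring
  have hdiff : ∀ n, u n - u (n + 1) = if m ≤ n + 1 then (1 : ℝ) / ((n + 1) * (n + 2)) else 0 := by
    intro n
    split_ifs with h
    · simp only [u, max_eq_left h, max_eq_left (h.trans n.succ.le_succ)]
      push_cast
      field_simp
      ring
    · simp only [u]
      rw [max_eq_right (by omega), max_eq_right (by omega), sub_self]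
  have h0 : u 0 - 0 = 1 / m := by simp [u, Nat.one_le_iff_ne_zero.2 hm]
  simpa only [hdiff, h0] using hasSum_sub_succ_of_antitone hu hl

theorem hasSum_ite_lt_const (L : ℕ) (x : ℝ) :
    HasSum (fun j : ℕ ↦ if j < L then x else 0) (L * x) := by
  have h : HasSum (fun j : ℕ ↦ if j < L then x else 0)
      (∑ j ∈ Finset.range L, if j < L then x else 0) :=
    hasSum_sum_of_ne_finset_zero fun j hj ↦ if_neg (by simpa using hj)
  rwa [Finset.sum_ite_of_true fun j hj ↦ Finset.mem_range.1 hj, Finset.sum_const,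
    Finset.card_range, nsmul_eq_mul] at h

theorem HasSum.swap_of_nonneg {α β : Type*} {f : α × β → ℝ} (hf : 0 ≤ f) {g : α → ℝ}
    {h : β → ℝ} {a : ℝ} (hrow : ∀ x, HasSum (fun y ↦ f (x, y)) (g x))
    (hcol : ∀ y, HasSum (fun x ↦ f (x, y)) (h y)) (hg : HasSum g a) : HasSum h a := by
  have hsum : Summable f := (summable_prod_of_nonneg hf).2
    ⟨fun x ↦ (hrow x).summable, by simpa only [fun x ↦ (hrow x).tsum_eq] using hg.summable⟩
  have hfa : HasSum f a := (hsum.hasSum.prod_fiberwise hrow).unique hg ▸ hsum.hasSum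
  exact ((Equiv.prodComm β α).hasSum_iff.2 hfa).prod_fiberwise hcol

theorem hasSum_one_div_pow_succ {b : ℝ} (hb : 1 < b) :
    HasSum (fun j : ℕ ↦ 1 / b ^ (j + 1)) (1 / (b - 1)) := by
  have h := (hasSum_geometric_of_lt_one (r := b⁻¹) (by positivity)
    (inv_lt_one_of_one_lt₀ hb)).mul_left b⁻¹
  have hterm : (fun j : ℕ ↦ 1 / b ^ (j + 1)) = fun j ↦ b⁻¹ * b⁻¹ ^ j := by
    ext j; rw [pow_succ', one_div, mul_inv, inv_pow]
  have hb0 : b ≠ 0 := by positivity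
  have hb1 : b - 1 ≠ 0 := by linarith
  rwa [hterm, show 1 / (b - 1) = b⁻¹ * (1 - b⁻¹)⁻¹ by field_simp]

theorem hasSum_natLog_div_succ_mul_succ {b : ℕ} (hb : 1 < b) :
    HasSum (fun n : ℕ ↦ (Nat.log b (n + 1) : ℝ) / ((n + 1) * (n + 2))) (1 / (b - 1)) := by
  have hcount : ∀ n j, b ^ (j + 1) ≤ n + 1 ↔ j < Nat.log b (n + 1) := fun n j ↦ by
    rw [← Nat.le_log_iff_pow_le hb n.succ_ne_zero, Nat.succ_le_iff]
  refine HasSum.swap_of_nonneg (f := fun p : ℕ × ℕ ↦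
      if b ^ (p.1 + 1) ≤ p.2 + 1 then (1 : ℝ) / ((p.2 + 1) * (p.2 + 2)) else 0)
    (fun p ↦ by dsimp only; split_ifs <;> positivity) (fun j ↦ ?_) (fun n ↦ ?_)
    (hasSum_one_div_pow_succ (b := b) (by exact_mod_cast hb))
  · simpa using hasSum_ite_le_one_div_mul_succ (pow_ne_zero (j + 1) (by omega : b ≠ 0))
  · simp_rw [hcount]
    simpa only [mul_one_div] using hasSum_ite_lt_const (Nat.log b (n + 1)) (1 / ((n + 1) * (n + 2)))

/-- `Σ_{n=1}^∞ ⌊log₂ n⌋/(n(n+1)) = 1`, where `⌊log₂ n⌋ = Nat.log 2 n` is the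
integer part of `log₂ n`; equivalently `Σ_{n=1}^∞ (⌊log₂ n⌋+1)/(n(n+1)) = 2`. -/
theorem tsum_log2_div_eq_one :
    (∑' n : ℕ, (Nat.log 2 (n + 1) : ℝ) / ((n + 1) * (n + 2))) = 1 ∧
    (∑' n : ℕ, ((Nat.log 2 (n + 1) : ℝ) + 1) / ((n + 1) * (n + 2))) = 2 := by
  have hlog := hasSum_natLog_div_succ_mul_succ one_lt_two
  have hone := hasSum_ite_le_one_div_mul_succ one_ne_zero
  norm_num at hlog
  simp only [le_add_iff_nonneg_left, zero_le, if_true, Nat.cast_one, div_one] at hone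
  refine ⟨hlog.tsum_eq, ?_⟩
  simp_rw [add_div]
  rw [(hlog.add hone).tsum_eq]
  norm_num
end

section
/- Let g : (0,1] → ℝ be Riemann integrable on (0,1] with |g(x)| ≤ M|log x|^k for x near 0 (some M, k ≥ 1), and let q ∈ ℕ and F ⊆ {1,…,q}. Then lim_{N→∞} (1/N) Σ_{m ≥ 1, m mod q ∈ F} g(m/N) = (|F|/q) ∫_0^1 g(x) dx, where the sum is over positive integers m ≤ N congruent mod q to an element of F. -/
/-!
Splitting `F` into residue classes, it suffices to treat one progression `w, w + q, w + 2q, …`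
with `1 ≤ w ≤ q`. Apart from its first term, `(q / N) ∑ g (m / N)` is the integral over `(0, 1]`
of the step function equal to `g (m / N)` on `((m - q) / N, m / N]`. At every point `x` of
continuity of `g` this step function tends to `g x`, and since it samples `g` to the right of `x`
it is dominated by `C + |M| |log x| ^ k`, which is integrable on `(0, 1]`; dominated convergence
gives the limit. The first term `g (w / N) / N` is at most the integral of the same majorant over
`(0, 1 / N]`, so it vanishes in the limit.
-/

open Filter MeasureTheory Set Real Topology

lemma ite_exists_apply_eq_eq_sum_ite {ι κ β : Type*} [DecidableEq κ] [AddCommMonoid β]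
    {f : ι → κ} {F : Finset ι} (hf : InjOn f F) (i : ι) (b : β) :
    (if ∃ v ∈ F, f i = f v then b else 0) = ∑ v ∈ F, if f i = f v then b else 0 := by
  split_ifs with h
  · obtain ⟨v, hv, hiv⟩ := h
    rw [Finset.sum_eq_single_of_mem v hv fun u hu huv => if_neg fun hiu =>
      huv (hf hu hv (hiu.symm.trans hiv)), if_pos hiv]
  · push Not at h
    exact (Finset.sum_eq_zero fun v hv => if_neg (h v hv)).symm

lemma injOn_mod_Icc (q : ℕ) : InjOn (· % q) (Finset.Icc 1 q : Set ℕ) := by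
  intro a ha b hb hab
  simp only [Finset.coe_Icc, mem_Icc] at ha hb
  refine Nat.ModEq.eq_of_abs_lt hab (abs_lt.2 ⟨?_, ?_⟩) <;> omega

lemma integrableOn_abs_log_pow (k : ℕ) : IntegrableOn (fun x => |log x| ^ k) (Ioc 0 1) := by
  -- `|log x| ≤ x ^ (-t) / t` on `(0, 1]`, and `t * k < 1` keeps `x ^ (-(t * k))` integrable.
  set t : ℝ := 1 / (k + 1)
  have ht : 0 < t := by positivity
  have htk : t * k < 1 := by
    rw [div_mul_eq_mul_div, one_mul, div_lt_one (by positivity)]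
    linarith
  have hrpow : IntegrableOn (fun x : ℝ => x ^ (-(t * k))) (Ioc 0 1) := by
    have := intervalIntegral.intervalIntegrable_rpow' (a := 0) (b := 1) (r := -(t * k))
      (by linarith)
    rwa [intervalIntegrable_iff, uIoc_of_le zero_le_one] at this
  refine (hrpow.const_mul ((1 / t) ^ k)).mono'
    (measurable_log.abs.pow_const k).aestronglyMeasurable ?_
  refine ae_restrict_of_forall_mem measurableSet_Ioc fun x ⟨hx0, hx1⟩ => ?_
  have hxt : 0 < x ^ t := rpow_pos_of_pos hx0 t
  have hlog : |log x| ≤ 1 / t * x ^ (-t) := by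
    have := abs_log_mul_self_rpow_lt x t hx0 hx1 ht
    rw [abs_mul, abs_of_pos hxt, ← lt_div_iff₀ hxt] at this
    rw [rpow_neg hx0.le, ← div_eq_mul_inv]
    exact this.le
  rw [Real.norm_eq_abs, abs_of_nonneg (by positivity), ← neg_mul, rpow_mul_natCast hx0.le,
    ← mul_pow]
  exact pow_le_pow_left₀ (abs_nonneg _) hlog k

lemma exists_abs_le_add_abs_log_pow {g : ℝ → ℝ} {M δ : ℝ} {k : ℕ} (hδ : 0 < δ)
    (hbound : ∀ x ∈ Ioc 0 δ, |g x| ≤ M * |log x| ^ k)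
    (hlocbdd : ∀ δ' ∈ Ioc (0 : ℝ) 1, ∃ C : ℝ, ∀ x ∈ Icc δ' 1, |g x| ≤ C) :
    ∃ C, ∀ x y, 0 < x → x ≤ y → y ≤ 1 → |g y| ≤ C + |M| * |log x| ^ k := by
  obtain ⟨C, hC⟩ := hlocbdd (min δ 1) ⟨lt_min hδ one_pos, min_le_right _ _⟩
  refine ⟨C, fun x y hx hxy hy1 => ?_⟩
  have hC0 : 0 ≤ C := (abs_nonneg _).trans (hC 1 ⟨min_le_right _ _, le_rfl⟩)
  rcases le_or_gt (min δ 1) y with hδy | hyδ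
  · exact le_add_of_le_of_nonneg (hC y ⟨hδy, hy1⟩) (by positivity)
  · have hlog : |log y| ≤ |log x| := by
      rw [abs_of_nonpos (log_nonpos (hx.le.trans hxy) hy1),
        abs_of_nonpos (log_nonpos hx.le (hxy.trans hy1)), neg_le_neg_iff]
      exact log_le_log hx hxy
    calc |g y| ≤ M * |log y| ^ k := hbound y ⟨hx.trans_le hxy, hyδ.le.trans (min_le_left _ _)⟩
      _ ≤ |M| * |log x| ^ k := by gcongr; exact le_abs_self M
      _ ≤ C + |M| * |log x| ^ k := le_add_of_nonneg_left hC0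

/-- The least term `≥ y` of `w, w + q, w + 2q, …`, provided `y > w - q`. -/
noncomputable def progressionCeil (q w : ℕ) (y : ℝ) : ℕ := w + q * ⌈(y - w) / q⌉₊

section progressionCeil

variable {q w : ℕ} {y : ℝ}

lemma progressionCeil_modEq : progressionCeil q w y ≡ w [MOD q] :=
  Nat.add_mul_mod_self_left w q _

lemma le_progressionCeil (hq : 0 < q) : y ≤ progressionCeil q w y := by
  have hq' : (0 : ℝ) < q := by exact_mod_cast hq
  have hceil := (div_le_iff₀ hq').1 (Nat.le_ceil ((y - w) / q))
  rw [progressionCeil]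
  push_cast
  linarith

lemma progressionCeil_lt_add (hq : 0 < q) (hy : (w : ℝ) - q < y) :
    (progressionCeil q w y : ℝ) < y + q := by
  have hq' : (0 : ℝ) < q := by exact_mod_cast hq
  rw [progressionCeil]
  push_cast
  rcases le_or_gt (y - w) 0 with hyw | hyw
  · rw [Nat.ceil_eq_zero.2 (div_nonpos_of_nonpos_of_nonneg hyw hq'.le)]
    push_cast
    linarith
  · have := Nat.ceil_lt_add_one (div_pos hyw hq').le
    rw [div_add_one hq'.ne', lt_div_iff₀ hq'] at this
    linarith

lemma mem_Ico_iff_eq_progressionCeil {m : ℕ} (hq : 0 < q) (hm : m ≡ w [MOD q])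
    (hy : (w : ℝ) - q < y) : (m : ℝ) ∈ Ico y (y + q) ↔ m = progressionCeil q w y := by
  constructor
  · rintro ⟨hym, hmy⟩
    refine hm.trans progressionCeil_modEq.symm |>.eq_of_abs_lt ?_
    have h1 := le_progressionCeil (w := w) (y := y) hq
    have h2 := progressionCeil_lt_add hq hy
    have : |(progressionCeil q w y : ℝ) - m| < q := by rw [abs_lt]; constructor <;> linarith
    exact_mod_cast this
  · rintro rfl
    exact ⟨le_progressionCeil hq, progressionCeil_lt_add hq hy⟩

end progressionCeil

def progressionTerms (q w N : ℕ) : Finset ℕ := {m ∈ Finset.Ioc q N | m ≡ w [MOD q]}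

section progressionTerms

variable {q w N : ℕ}

lemma filter_Icc_mod_eq_eq_insert (hw : w ∈ Finset.Icc 1 q) (hwN : w ≤ N) :
    {m ∈ Finset.Icc 1 N | m % q = w % q} = insert w (progressionTerms q w N) := by
  ext m
  simp only [progressionTerms, Finset.mem_insert, Finset.mem_filter, Finset.mem_Icc,
    Finset.mem_Ioc]
  constructor
  · rintro ⟨⟨hm1, hmN⟩, hmw⟩
    by_cases hmq : m ≤ q
    · exact .inl (injOn_mod_Icc q (by simp [hm1, hmq]) hw hmw)
    · exact .inr ⟨⟨by omega, hmN⟩, hmw⟩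
  · have := Finset.mem_Icc.1 hw
    rintro (rfl | ⟨⟨hqm, hmN⟩, hmw⟩)
    · exact ⟨⟨this.1, hwN⟩, rfl⟩
    · exact ⟨⟨by omega, hmN⟩, hmw⟩

lemma self_notMem_progressionTerms (hw : w ≤ q) : w ∉ progressionTerms q w N := by
  simp only [progressionTerms, Finset.mem_filter, Finset.mem_Ioc, not_and, and_imp]
  omega

lemma progressionCeil_mem_progressionTerms {y : ℝ} (hq : 0 < q) (hw : w ≤ q) (hqy : (q : ℝ) < y)
    (hyN : y + q ≤ N) : progressionCeil q w y ∈ progressionTerms q w N := by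
  have hw' : (w : ℝ) ≤ q := by exact_mod_cast hw
  have h1 := le_progressionCeil (w := w) (y := y) hq
  have h2 := progressionCeil_lt_add (w := w) hq (by linarith)
  refine Finset.mem_filter.2 ⟨Finset.mem_Ioc.2 ⟨?_, ?_⟩, progressionCeil_modEq⟩
  · exact_mod_cast hqy.trans_le h1
  · exact_mod_cast (h2.trans_le hyN).le

end progressionTerms

noncomputable def progressionStep (g : ℝ → ℝ) (q w N : ℕ) (x : ℝ) : ℝ :=
  ∑ m ∈ progressionTerms q w N, (Ioc (((m : ℝ) - q) / N) (m / N)).indicator (fun _ => g (m / N)) x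

section progressionStep

variable {g : ℝ → ℝ} {q w N : ℕ}

lemma progressionStep_eq {x : ℝ} (hq : 0 < q) (hw : w ≤ q) (hN : 0 < N) (hx : 0 < x) :
    progressionStep g q w N x =
      if progressionCeil q w (N * x) ∈ progressionTerms q w N then
        g (progressionCeil q w (N * x) / N) else 0 := by
  have hN' : (0 : ℝ) < N := by exact_mod_cast hN
  have hy : (w : ℝ) - q < N * x := by
    have : (w : ℝ) ≤ q := by exact_mod_cast hw
    nlinarith
  have hpiece : ∀ m ∈ progressionTerms q w N,
      x ∈ Ioc (((m : ℝ) - q) / N) (m / N) ↔ m = progressionCeil q w (N * x) := by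
    intro m hm
    rw [← mem_Ico_iff_eq_progressionCeil hq (Finset.mem_filter.1 hm).2 hy, mem_Ioc, mem_Ico,
      div_lt_iff₀ hN', le_div_iff₀ hN']
    constructor <;> rintro ⟨h1, h2⟩ <;> constructor <;> linarith
  rw [progressionStep, ← Finset.sum_ite_eq' _ _ fun m : ℕ => g (m / N)]
  refine Finset.sum_congr rfl fun m hm => ?_
  simp only [indicator_apply, hpiece m hm]

lemma setIntegral_progressionStep :
    ∫ x in Ioc 0 1, progressionStep g q w N x =
      q / N * ∑ m ∈ progressionTerms q w N, g (m / N) := by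
  unfold progressionStep
  rw [integral_finsetSum _ fun m _ =>
    (integrable_const _).indicator measurableSet_Ioc, Finset.mul_sum]
  refine Finset.sum_congr rfl fun m hm => ?_
  obtain ⟨hqm, hmN⟩ := Finset.mem_Ioc.1 (Finset.mem_filter.1 hm).1
  have hN : (0 : ℝ) < N := Nat.cast_pos.2 (by omega)
  have hqm' : (q : ℝ) < m := by exact_mod_cast hqm
  have hmN' : (m : ℝ) ≤ N := by exact_mod_cast hmN
  have hsub : Ioc (((m : ℝ) - q) / N) (m / N) ⊆ Ioc 0 1 :=
    Ioc_subset_Ioc (div_nonneg (by linarith) hN.le) ((div_le_one hN).2 hmN')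
  rw [integral_indicator_const _ measurableSet_Ioc, measureReal_restrict_apply measurableSet_Ioc,
    inter_eq_left.2 hsub, Real.volume_real_Ioc_of_le (by gcongr; linarith), smul_eq_mul]
  ring

lemma tendsto_progressionStep {x : ℝ} (hq : 0 < q) (hw : w ≤ q) (hx : x ∈ Ioo 0 1)
    (hgx : ContinuousAt g x) :
    Tendsto (fun N : ℕ => progressionStep g q w N x) atTop (𝓝 (g x)) := by
  obtain ⟨hx0, hx1⟩ := hx
  have hw' : (w : ℝ) ≤ q := by exact_mod_cast hw
  have hσ : Tendsto (fun N : ℕ => (progressionCeil q w (N * x) : ℝ) / N) atTop (𝓝 x) := by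
    refine tendsto_of_tendsto_of_tendsto_of_le_of_le' tendsto_const_nhds
      (by simpa using (tendsto_const_div_atTop_nhds_zero_nat (q : ℝ)).const_add x) ?_ ?_
    all_goals filter_upwards [eventually_gt_atTop 0] with N hN
    all_goals have hN' : (0 : ℝ) < N := by exact_mod_cast hN
    · rw [le_div_iff₀ hN', mul_comm]
      exact le_progressionCeil hq
    · rw [add_div' _ _ _ hN'.ne', div_le_div_iff_of_pos_right hN', mul_comm]
      exact (progressionCeil_lt_add hq (by nlinarith)).le
  have hmem : ∀ᶠ N : ℕ in atTop, progressionCeil q w (N * x) ∈ progressionTerms q w N := by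
    have hlow := tendsto_natCast_atTop_atTop.atTop_mul_const hx0
    have hhigh := tendsto_natCast_atTop_atTop.atTop_mul_const (sub_pos.2 hx1)
    filter_upwards [hlow.eventually_gt_atTop (q : ℝ), hhigh.eventually_ge_atTop (q : ℝ)]
      with N hlowN hhighN
    exact progressionCeil_mem_progressionTerms hq hw hlowN (by linarith)
  refine (hgx.tendsto.comp hσ).congr' ?_
  filter_upwards [hmem, eventually_gt_atTop 0] with N hmemN hN
  rw [Function.comp_apply, progressionStep_eq hq hw hN hx0, if_pos hmemN]

end progressionStep

section RightEndpointMajorant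

variable {g φ : ℝ → ℝ} (hgφ : ∀ x y, 0 < x → x ≤ y → y ≤ 1 → |g y| ≤ φ x)
include hgφ

lemma abs_progressionStep_le {q w N : ℕ} {x : ℝ} (hq : 0 < q) (hw : w ≤ q) (hN : 0 < N)
    (hx : x ∈ Ioc 0 1) : |progressionStep g q w N x| ≤ φ x := by
  obtain ⟨hx0, hx1⟩ := hx
  rw [progressionStep_eq hq hw hN hx0]
  split_ifs with hmem
  · have hN' : (0 : ℝ) < N := by exact_mod_cast hN
    have hσN : progressionCeil q w (N * x) ≤ N :=
      (Finset.mem_Ioc.1 (Finset.mem_filter.1 hmem).1).2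
    refine hgφ x _ hx0 ?_ ((div_le_one hN').2 (by exact_mod_cast hσN))
    rw [le_div_iff₀ hN', mul_comm]
    exact le_progressionCeil hq
  · simpa using (abs_nonneg _).trans (hgφ x 1 hx0 hx1 le_rfl)

lemma tendsto_setIntegral_progressionStep (hφ : IntegrableOn φ (Ioc 0 1)) {q w : ℕ} (hq : 0 < q)
    (hw : w ≤ q) (hcont : ∀ᵐ x ∂(volume.restrict (Ioc (0 : ℝ) 1)), ContinuousAt g x) :
    Tendsto (fun N : ℕ => ∫ x in Ioc 0 1, progressionStep g q w N x) atTop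
      (𝓝 (∫ x in Ioc 0 1, g x)) := by
  have hIoo : ∀ᵐ x ∂(volume.restrict (Ioc (0 : ℝ) 1)), x ∈ Ioo 0 1 := by
    rw [← Measure.restrict_congr_set Ioo_ae_eq_Ioc]
    exact ae_restrict_mem measurableSet_Ioo
  refine tendsto_integral_filter_of_dominated_convergence φ (.of_forall fun N => ?_) ?_ hφ ?_
  · exact (Finset.measurable_sum _ fun m _ =>
      measurable_const.indicator measurableSet_Ioc).aestronglyMeasurable
  · filter_upwards [eventually_gt_atTop 0] with N hN
    exact ae_restrict_of_forall_mem measurableSet_Ioc fun x hx =>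
      (Real.norm_eq_abs _).trans_le (abs_progressionStep_le hgφ hq hw hN hx)
  · filter_upwards [hcont, hIoo] with x hgx hx
    exact tendsto_progressionStep hq hw hx hgx

lemma tendsto_one_div_mul_apply_div (hφ : IntegrableOn φ (Ioc 0 1)) {c : ℝ} (hc : 1 ≤ c) :
    Tendsto (fun N : ℕ => 1 / N * g (c / N)) atTop (𝓝 0) := by
  have hvol : Tendsto (fun N : ℕ => volume.restrict (Ioc (0 : ℝ) 1) (Ioc 0 (1 / N))) atTop
      (𝓝 0) := by
    refine tendsto_of_tendsto_of_tendsto_of_le_of_le tendsto_const_nhds ?_ (fun _ => zero_le)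
      fun N => Measure.restrict_apply_le _ _
    simpa using ENNReal.tendsto_ofReal (tendsto_const_div_atTop_nhds_zero_nat 1)
  refine squeeze_zero_norm' ?_ (hφ.tendsto_setIntegral_nhds_zero hvol)
  filter_upwards [eventually_ge_atTop ⌈c⌉₊, eventually_gt_atTop 0] with N hcN hN
  have hN' : (0 : ℝ) < N := by exact_mod_cast hN
  have hcN' : c ≤ N := Nat.ceil_le.1 hcN
  have hsub : Ioc 0 (1 / (N : ℝ)) ⊆ Ioc 0 1 :=
    Ioc_subset_Ioc_right ((div_le_one hN').2 (by linarith))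
  calc ‖1 / N * g (c / N)‖ = ∫ _ in Ioc 0 (1 / (N : ℝ)), |g (c / N)| := by
        rw [setIntegral_const, Real.volume_real_Ioc_of_le (by positivity), smul_eq_mul, sub_zero,
          norm_mul, Real.norm_eq_abs, Real.norm_eq_abs, abs_of_pos (by positivity)]
    _ ≤ ∫ x in Ioc 0 (1 / (N : ℝ)), φ x :=
        setIntegral_mono_on (integrableOn_const measure_Ioc_lt_top.ne) (hφ.mono_set hsub)
          measurableSet_Ioc fun x ⟨hx0, hx1⟩ =>
            hgφ x _ hx0 (hx1.trans (by gcongr)) ((div_le_one hN').2 hcN')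
    _ = ∫ x in Ioc 0 (1 / (N : ℝ)), φ x ∂(volume.restrict (Ioc 0 1)) := by
        rw [Measure.restrict_restrict_of_subset hsub]

theorem tendsto_riemannSum_modEq (hφ : IntegrableOn φ (Ioc 0 1)) {q w : ℕ} (hw : w ∈ Finset.Icc 1 q)
    (hcont : ∀ᵐ x ∂(volume.restrict (Ioc (0 : ℝ) 1)), ContinuousAt g x) :
    Tendsto (fun N : ℕ => 1 / (N : ℝ) * ∑ m ∈ Finset.Icc 1 N,
        if m % q = w % q then g (m / N) else 0) atTop
      (𝓝 (1 / q * ∫ x in Ioc 0 1, g x)) := by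
  obtain ⟨hw1, hwq⟩ := Finset.mem_Icc.1 hw
  have hq : 0 < q := by omega
  have hlim := (tendsto_one_div_mul_apply_div hgφ hφ (c := w) (by exact_mod_cast hw1)).add
    ((tendsto_setIntegral_progressionStep hgφ hφ hq hwq hcont).const_mul (1 / (q : ℝ)))
  rw [zero_add] at hlim
  refine hlim.congr' ?_
  filter_upwards [eventually_ge_atTop w] with N hwN
  have hq' : (q : ℝ) ≠ 0 := by exact_mod_cast hq.ne'
  rw [← Finset.sum_filter, setIntegral_progressionStep, filter_Icc_mod_eq_eq_insert hw hwN,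
    Finset.sum_insert (self_notMem_progressionTerms hwq)]
  field_simp

end RightEndpointMajorant

theorem riemann_sum_arithmetic_progressions_general (g : ℝ → ℝ) (M : ℝ) (k : ℕ)
    (δ : ℝ) (hδ : 0 < δ)
    (hbound : ∀ x ∈ Set.Ioc (0 : ℝ) δ, |g x| ≤ M * |Real.log x| ^ k)
    (hcont : ∀ᵐ x ∂(volume.restrict (Set.Ioc (0 : ℝ) 1)), ContinuousAt g x)
    (hlocbdd : ∀ δ' ∈ Set.Ioc (0 : ℝ) 1, ∃ C : ℝ, ∀ x ∈ Set.Icc δ' 1, |g x| ≤ C)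
    (q : ℕ) (F : Finset ℕ) (hF : F ⊆ Finset.Icc 1 q) :
    Tendsto
      (fun N : ℕ =>
        (1 / (N : ℝ)) * ∑ m ∈ Finset.Icc 1 N,
          if ∃ v ∈ F, m % q = v % q then g ((m : ℝ) / N) else 0)
      atTop
      (nhds (((F.card : ℝ) / q) * ∫ x in Set.Ioc (0 : ℝ) 1, g x)) := by
  obtain ⟨C, hC⟩ := exists_abs_le_add_abs_log_pow hδ hbound hlocbdd
  have hφ : IntegrableOn (fun x => C + |M| * |log x| ^ k) (Ioc 0 1) :=
    (integrableOn_const measure_Ioc_lt_top.ne).add ((integrableOn_abs_log_pow k).const_mul _)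
  have hsum := tendsto_finsetSum F fun v hv => tendsto_riemannSum_modEq hC hφ (hF hv) hcont
  rw [Finset.sum_const, nsmul_eq_mul, ← mul_assoc, mul_one_div] at hsum
  refine hsum.congr fun N => ?_
  rw [← Finset.mul_sum, Finset.sum_comm]
  congr 1
  exact Finset.sum_congr rfl fun m _ =>
    (ite_exists_apply_eq_eq_sum_ite ((injOn_mod_Icc q).mono hF) m _).symm

/-- let `g : (0,1] → ℝ` be Riemann integrable on `(0,1]` (encoded via the
Lebesgue criterion: a.e. continuous on `(0,1]` and bounded on each `[δ',1]`) with
`|g(x)| ≤ M|log x|^k` near `0`. For `q ∈ ℕ` and `F ⊆ {1,…,q}` (a set of residues mod `q`),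
`(1/N) Σ_{m ≤ N, m mod q ∈ F} g(m/N) → (|F|/q)·∫_0^1 g(x) dx`. -/
theorem riemann_sum_arithmetic_progressions (g : ℝ → ℝ) (M : ℝ) (k : ℕ) (hk : 1 ≤ k)
    (δ : ℝ) (hδ : 0 < δ)
    (hbound : ∀ x ∈ Set.Ioc (0 : ℝ) δ, |g x| ≤ M * |Real.log x| ^ k)
    (hcont : ∀ᵐ x ∂(volume.restrict (Set.Ioc (0 : ℝ) 1)), ContinuousAt g x)
    (hlocbdd : ∀ δ' ∈ Set.Ioc (0 : ℝ) 1, ∃ C : ℝ, ∀ x ∈ Set.Icc δ' 1, |g x| ≤ C)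
    (q : ℕ) (hq : 0 < q) (F : Finset ℕ) (hF : F ⊆ Finset.Icc 1 q) :
    Tendsto
      (fun N : ℕ =>
        (1 / (N : ℝ)) * ∑ m ∈ Finset.Icc 1 N,
          if ∃ v ∈ F, m % q = v % q then g ((m : ℝ) / N) else 0)
      atTop
      (nhds (((F.card : ℝ) / q) * ∫ x in Set.Ioc (0 : ℝ) 1, g x)) :=
  riemann_sum_arithmetic_progressions_general g M k δ hδ hbound hcont hlocbdd q F hF
end
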